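/- Let F be a finite index set of size m, and for each i ∈ F let Z^{(i)}_1,...,Z^{(i)}_n be independent symmetric mean-zero random variables (n ≥ 2). Let δ ∈ (0,1) and assume m ≤ (δ/2)·e^{n/8}. Then with probability at least 1 − δ, simultaneously for all i ∈ F: |μ̂_i| ≤ (σ̂_i/√n)·√(4 log(2m/δ)), where μ̂_i and σ̂_i are the sample mean and unbiased sample standard deviation of Z^{(i)}_1,...,Z^{(i)}_n. -/

import Mathlib

/-!
Efron's symmetrization. Independence and symmetry make the joint law of `Z₁, …, Zₙ` invariant
under every sign flip `Z_k ↦ ε_k Z_k`, so `P[(∑ Z_k)² > s² ∑ Z_k²]` equals its average over the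
`2ⁿ` sign patterns `ε`. For fixed values `z`, the proportion of patterns with
`(∑ ε_k z_k)² > s² ∑ z_k²` is at most `2 e^{-s²/2}` by a Chernoff bound, since the exponential
moment of `∑ ε_k z_k` is `∏ cosh (l z_k) ≤ e^{l² ∑ z_k² / 2}`.

Squaring shows that `|T| > t` for the T-statistic implies `(∑ Z_k)² > s² ∑ Z_k²` with
`s² = n t² / (n - 1 + t²)`, which is at least `t² / 2` once `t² ≤ n + 1`. For
`t² = 4 log (2m/δ) ≤ n/2` each feature fails with probability at most `δ/m`, and a union bound
over the `m` features concludes.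
-/

open MeasureTheory ProbabilityTheory Finset Real
open scoped ENNReal

noncomputable def boolSign (b : Bool) : ℝ := if b then 1 else -1

lemma boolSign_mul_self (b : Bool) : boolSign b * boolSign b = 1 := by
  cases b <;> norm_num [boolSign]

noncomputable def signFlip {ι : Type*} (ε : ι → Bool) (v : ι → ℝ) : ι → ℝ :=
  fun k => boolSign (ε k) * v k

section SignFlip

variable {ι : Type*} (ε : ι → Bool)

lemma signFlip_neg (v : ι → ℝ) : signFlip ε (-v) = -signFlip ε v := by
  ext k; simp [signFlip]

lemma sum_sq_signFlip [Fintype ι] (v : ι → ℝ) : ∑ k, signFlip ε v k ^ 2 = ∑ k, v k ^ 2 := by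
  simp [signFlip, mul_pow, sq (boolSign _), boolSign_mul_self]

lemma measurable_signFlip : Measurable (signFlip ε) :=
  measurable_pi_lambda _ fun k => (measurable_pi_apply k).const_mul _

end SignFlip

lemma card_filter_lt_mul_exp_le {α : Type*} (s : Finset α) (f : α → ℝ) (a : ℝ) {l : ℝ}
    (hl : 0 ≤ l) : #{x ∈ s | a < f x} * exp (l * a) ≤ ∑ x ∈ s, exp (l * f x) :=
  calc #{x ∈ s | a < f x} * exp (l * a)
      ≤ ∑ x ∈ s with a < f x, exp (l * f x) := by
        rw [← nsmul_eq_mul]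
        exact card_nsmul_le_sum _ _ _ fun x hx =>
          exp_le_exp.2 (mul_le_mul_of_nonneg_left (mem_filter.1 hx).2.le hl)
    _ ≤ ∑ x ∈ s, exp (l * f x) :=
        sum_le_sum_of_subset_of_nonneg (filter_subset _ _) fun _ _ _ => (exp_pos _).le

section Rademacher

variable {ι : Type*} [Fintype ι] [DecidableEq ι]

lemma sum_exp_mul_sum_signFlip_le (z : ι → ℝ) (l : ℝ) :
    ∑ ε : ι → Bool, exp (l * ∑ k, signFlip ε z k)
      ≤ 2 ^ Fintype.card ι * exp (l ^ 2 * (∑ k, z k ^ 2) / 2) :=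
  calc ∑ ε : ι → Bool, exp (l * ∑ k, signFlip ε z k)
      = ∏ k, ∑ b : Bool, exp (l * (boolSign b * z k)) := by
        simp only [Fintype.prod_sum, mul_sum, exp_sum, signFlip]
    _ = ∏ k, 2 * cosh (l * z k) := by
        refine prod_congr rfl fun k _ => ?_
        simp only [Fintype.sum_bool, boolSign, cosh_eq, if_true, Bool.false_eq_true, if_false]
        ring_nf
    _ ≤ ∏ k, 2 * exp ((l * z k) ^ 2 / 2) :=
        prod_le_prod (fun k _ => by positivity) fun k _ =>
          mul_le_mul_of_nonneg_left (cosh_le_exp_half_sq _) zero_le_two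
    _ = 2 ^ Fintype.card ι * exp (l ^ 2 * (∑ k, z k ^ 2) / 2) := by
        rw [prod_mul_distrib, prod_const, ← exp_sum, card_univ, mul_sum, sum_div]
        simp only [mul_pow]

lemma card_lt_sum_signFlip_le (z : ι → ℝ) {s : ℝ} (hs : 0 ≤ s) :
    (#{ε : ι → Bool | s * √(∑ k, z k ^ 2) < ∑ k, signFlip ε z k} : ℝ)
      ≤ 2 ^ Fintype.card ι * exp (-(s ^ 2 / 2)) := by
  rcases (sum_nonneg fun k _ => sq_nonneg (z k) : 0 ≤ ∑ k, z k ^ 2).eq_or_lt with hQ | hQ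
  · have hz : z = 0 := funext fun k =>
      pow_eq_zero_iff two_ne_zero |>.1 <| (sum_eq_zero_iff_of_nonneg fun k _ => sq_nonneg _).1
        hQ.symm k (mem_univ k)
    subst hz
    simp [signFlip]
    positivity
  -- Chernoff bound at the optimal exponent `l = s / √(∑ z_k²)`.
  have hl : 0 ≤ s / √(∑ k, z k ^ 2) := by positivity
  have hls : s / √(∑ k, z k ^ 2) * (s * √(∑ k, z k ^ 2)) = s ^ 2 := by
    field_simp [(sqrt_pos.2 hQ).ne']
  have hlQ : (s / √(∑ k, z k ^ 2)) ^ 2 * (∑ k, z k ^ 2) / 2 = s ^ 2 / 2 := by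
    rw [div_pow, sq_sqrt hQ.le]; field_simp
  have key := (card_filter_lt_mul_exp_le univ (fun ε : ι → Bool => ∑ k, signFlip ε z k)
    (s * √(∑ k, z k ^ 2)) hl).trans (sum_exp_mul_sum_signFlip_le z _)
  rwa [hls, hlQ, ← le_div_iff₀ (exp_pos _), mul_div_assoc, ← exp_sub,
    show s ^ 2 / 2 - s ^ 2 = -(s ^ 2 / 2) by ring] at key

lemma card_sq_sum_signFlip_gt_le (z : ι → ℝ) {s : ℝ} (hs : 0 ≤ s) :
    (#{ε : ι → Bool | s ^ 2 * ∑ k, z k ^ 2 < (∑ k, signFlip ε z k) ^ 2} : ℝ)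
      ≤ 2 * (2 ^ Fintype.card ι * exp (-(s ^ 2 / 2))) := by
  have hpos := card_lt_sum_signFlip_le z hs
  have hneg := card_lt_sum_signFlip_le (-z) hs
  simp only [signFlip_neg, Pi.neg_apply, neg_sq, sum_neg_distrib] at hneg
  have hsub : #{ε : ι → Bool | s ^ 2 * ∑ k, z k ^ 2 < (∑ k, signFlip ε z k) ^ 2}
      ≤ #{ε : ι → Bool | s * √(∑ k, z k ^ 2) < ∑ k, signFlip ε z k
          ∨ s * √(∑ k, z k ^ 2) < -∑ k, signFlip ε z k} := by
    refine card_le_card (monotone_filter_right _ fun ε _ hε => ?_)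
    rw [← sq_sqrt (sum_nonneg fun k _ => sq_nonneg (z k)), ← mul_pow, sq_lt_sq,
      abs_of_nonneg (by positivity)] at hε
    exact lt_abs.1 hε
  rw [filter_or] at hsub
  have := (Nat.cast_le (α := ℝ)).2 (hsub.trans (card_union_le _ _))
  push_cast at this
  linarith

end Rademacher

open Classical in
lemma sum_measure_le_of_card_le {α β : Type*} [MeasurableSpace α] (ν : Measure α)
    (s : Finset β) {A : β → Set α} (hA : ∀ b, MeasurableSet (A b)) {c : ℝ≥0∞}
    (hc : ∀ x, (#{b ∈ s | x ∈ A b} : ℝ≥0∞) ≤ c) :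
    ∑ b ∈ s, ν (A b) ≤ c * ν Set.univ := by
  calc ∑ b ∈ s, ν (A b) = ∑ b ∈ s, ∫⁻ x, (A b).indicator 1 x ∂ν := by
        simp_rw [lintegral_indicator_one (hA _)]
    _ = ∫⁻ x, (#{b ∈ s | x ∈ A b} : ℝ≥0∞) ∂ν := by
        rw [← lintegral_finsetSum _ fun b _ => measurable_one.indicator (hA b)]
        simp_rw [Set.indicator_apply, Pi.one_apply, sum_boole]
    _ ≤ c * ν Set.univ := (lintegral_mono hc).trans_eq (lintegral_const c)

section SignInvariant

variable {ι : Type*} [Fintype ι]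

lemma measure_sq_sum_gt_le_of_measurePreserving (ν : Measure (ι → ℝ)) [IsProbabilityMeasure ν]
    (hν : ∀ ε, MeasurePreserving (signFlip ε) ν ν) {s : ℝ} (hs : 0 ≤ s) :
    ν {v | s ^ 2 * ∑ k, v k ^ 2 < (∑ k, v k) ^ 2}
      ≤ ENNReal.ofReal (2 * exp (-(s ^ 2 / 2))) := by
  classical
  set B := {v : ι → ℝ | s ^ 2 * ∑ k, v k ^ 2 < (∑ k, v k) ^ 2}
  have hB : MeasurableSet B := measurableSet_lt (by fun_prop) (by fun_prop)
  have hflip : ∀ ε, ν (signFlip ε ⁻¹' B) = ν B := fun ε =>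
    (hν ε).measure_preimage hB.nullMeasurableSet
  have hcount : ∀ v, (#{ε ∈ univ | v ∈ signFlip ε ⁻¹' B} : ℝ≥0∞)
      ≤ ENNReal.ofReal (2 * (2 ^ Fintype.card ι * exp (-(s ^ 2 / 2)))) := by
    intro v
    rw [← ENNReal.ofReal_natCast]
    refine ENNReal.ofReal_le_ofReal ?_
    simpa [B, sum_sq_signFlip] using card_sq_sum_signFlip_gt_le v hs
  have key := sum_measure_le_of_card_le ν univ (fun ε => measurable_signFlip ε hB) hcount
  simp_rw [hflip, sum_const, card_univ, Fintype.card_fun, Fintype.card_bool, measure_univ,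
    mul_one, nsmul_eq_mul] at key
  rw [mul_left_comm, ENNReal.ofReal_mul (by positivity), ENNReal.ofReal_pow zero_le_two,
    ENNReal.ofReal_ofNat, Nat.cast_pow, Nat.cast_ofNat] at key
  exact (ENNReal.mul_le_mul_iff_right (by positivity) (by simp)).1 key

end SignInvariant

section Independent

variable {Ω ι : Type*} [MeasurableSpace Ω] {μ : Measure Ω} [Fintype ι] {X : ι → Ω → ℝ}

lemma measurePreserving_signFlip_map (hX : ∀ k, Measurable (X k)) (hindep : iIndepFun X μ)
    (hsym : ∀ k, μ.map (X k) = μ.map (fun ω => -X k ω)) (ε : ι → Bool) :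
    MeasurePreserving (signFlip ε) (μ.map fun ω k => X k ω) (μ.map fun ω k => X k ω) := by
  refine ⟨measurable_signFlip ε, ?_⟩
  have hflip : ∀ k, μ.map (fun ω => boolSign (ε k) * X k ω) = μ.map (X k) := by
    intro k
    cases ε k
    · simp [boolSign, hsym k]
    · simp [boolSign]
  rw [Measure.map_map (measurable_signFlip ε) (measurable_pi_lambda _ hX)]
  change μ.map (fun ω k => boolSign (ε k) * X k ω) = _
  have hflip_indep : iIndepFun (fun k ω => boolSign (ε k) * X k ω) μ :=
    hindep.comp (fun k x => boolSign (ε k) * x) fun k => measurable_const_mul _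
  rw [hflip_indep.map_fun_eq_pi_map fun k => ((hX k).const_mul _).aemeasurable,
    hindep.map_fun_eq_pi_map fun k => (hX k).aemeasurable]
  exact congrArg Measure.pi (funext hflip)

theorem measure_sq_sum_gt_le (hX : ∀ k, Measurable (X k)) (hindep : iIndepFun X μ)
    (hsym : ∀ k, μ.map (X k) = μ.map (fun ω => -X k ω)) {s : ℝ} (hs : 0 ≤ s) :
    μ {ω | s ^ 2 * ∑ k, X k ω ^ 2 < (∑ k, X k ω) ^ 2}
      ≤ ENNReal.ofReal (2 * exp (-(s ^ 2 / 2))) := by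
  have hjoint : Measurable fun ω k => X k ω := measurable_pi_lambda _ hX
  have := hindep.isProbabilityMeasure
  have := Measure.isProbabilityMeasure_map (μ := μ) hjoint.aemeasurable
  have hB : MeasurableSet {v : ι → ℝ | s ^ 2 * ∑ k, v k ^ 2 < (∑ k, v k) ^ 2} :=
    measurableSet_lt (by fun_prop) (by fun_prop)
  have h := measure_sq_sum_gt_le_of_measurePreserving _
    (measurePreserving_signFlip_map hX hindep hsym) hs
  rwa [Measure.map_apply hjoint hB] at h

end Independent

section TStatistic

variable {n : ℕ}

noncomputable def sampleMean (z : Fin n → ℝ) : ℝ := (1 / (n : ℝ)) * ∑ k, z k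

noncomputable def sampleStd (z : Fin n → ℝ) : ℝ :=
  √((1 / ((n : ℝ) - 1)) * ∑ k, (z k - sampleMean z) ^ 2)

lemma sum_sq_sub_sampleMean (hn : n ≠ 0) (z : Fin n → ℝ) :
    ∑ k, (z k - sampleMean z) ^ 2 = ∑ k, z k ^ 2 - (∑ k, z k) ^ 2 / n := by
  have hn' : (n : ℝ) ≠ 0 := Nat.cast_ne_zero.2 hn
  simp only [sub_sq, sum_add_distrib, sum_sub_distrib, ← sum_mul, ← mul_sum, sum_const,
    card_univ, Fintype.card_fin, nsmul_eq_mul, sampleMean]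
  field_simp
  ring

lemma mul_sum_sq_lt_sq_sum_of_lt_abs_sampleMean (hn : 2 ≤ n) (z : Fin n → ℝ) {t : ℝ}
    (ht : 0 ≤ t) (h : sampleStd z / √n * t < |sampleMean z|) :
    n * t ^ 2 / (n - 1 + t ^ 2) * ∑ k, z k ^ 2 < (∑ k, z k) ^ 2 := by
  have hn1 : (1 : ℝ) < n := by exact_mod_cast hn
  have hvar : 0 ≤ 1 / ((n : ℝ) - 1) * ∑ k, (z k - sampleMean z) ^ 2 := by
    have := sum_nonneg fun k (_ : k ∈ univ) => sq_nonneg (z k - sampleMean z)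
    exact mul_nonneg (by rw [one_div_nonneg]; linarith) this
  have hsq : sampleStd z ^ 2 / n * t ^ 2 < sampleMean z ^ 2 := by
    have := pow_lt_pow_left₀ h (by unfold sampleStd; positivity) two_ne_zero
    rwa [sq_abs, mul_pow, div_pow, sq_sqrt n.cast_nonneg] at this
  rw [sampleStd, sq_sqrt hvar, sum_sq_sub_sampleMean (by omega), sampleMean] at hsq
  rw [div_mul_eq_mul_div, div_lt_iff₀ (by positivity)]
  field_simp at hsq
  rw [div_lt_iff₀ (by linarith)] at hsq
  nlinarith

end TStatistic

theorem measure_lt_abs_sampleMean_le {Ω : Type*} [MeasurableSpace Ω] {μ : Measure Ω} {n : ℕ}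
    {X : Fin n → Ω → ℝ} (hn : 2 ≤ n) (hX : ∀ k, Measurable (X k)) (hindep : iIndepFun X μ)
    (hsym : ∀ k, μ.map (X k) = μ.map (fun ω => -X k ω)) {t : ℝ} (ht : 0 ≤ t)
    (htn : t ^ 2 ≤ n + 1) :
    μ {ω | sampleStd (X · ω) / √n * t < |sampleMean (X · ω)|}
      ≤ ENNReal.ofReal (2 * exp (-(t ^ 2 / 4))) := by
  have hn1 : (1 : ℝ) < n := by exact_mod_cast hn
  have hden : 0 < (n : ℝ) - 1 + t ^ 2 := by positivity
  have hs : t ^ 2 / 2 ≤ n * t ^ 2 / (n - 1 + t ^ 2) := by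
    rw [le_div_iff₀ hden]; nlinarith
  have hs0 : 0 ≤ n * t ^ 2 / (n - 1 + t ^ 2) := by positivity
  calc μ {ω | sampleStd (X · ω) / √n * t < |sampleMean (X · ω)|}
      ≤ μ {ω | √(n * t ^ 2 / (n - 1 + t ^ 2)) ^ 2 * ∑ k, X k ω ^ 2 < (∑ k, X k ω) ^ 2} :=
        measure_mono fun ω hω => by
          rw [sq_sqrt hs0]
          exact mul_sum_sq_lt_sq_sum_of_lt_abs_sampleMean hn _ ht hω
    _ ≤ ENNReal.ofReal (2 * exp (-(√(n * t ^ 2 / (n - 1 + t ^ 2)) ^ 2 / 2))) :=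
        measure_sq_sum_gt_le hX hindep hsym (sqrt_nonneg _)
    _ ≤ ENNReal.ofReal (2 * exp (-(t ^ 2 / 4))) := by
        rw [sq_sqrt hs0]
        exact ENNReal.ofReal_le_ofReal <|
          mul_le_mul_of_nonneg_left (exp_le_exp.2 (by linarith)) zero_le_two

lemma one_sub_le_toReal_measure_of_measure_compl_le {α : Type*} [MeasurableSpace α]
    {μ : Measure α} [IsProbabilityMeasure μ] {s : Set α} {δ : ℝ} (hδ : 0 ≤ δ)
    (h : μ sᶜ ≤ ENNReal.ofReal δ) : 1 - δ ≤ (μ s).toReal := by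
  have hcover : 1 ≤ μ s + μ sᶜ := by
    simpa [measure_univ] using measure_union_le (μ := μ) s sᶜ
  have := ENNReal.toReal_mono (by finiteness) hcover
  rw [ENNReal.toReal_one, ENNReal.toReal_add (measure_ne_top _ _) (measure_ne_top _ _)] at this
  linarith [ENNReal.toReal_le_of_le_ofReal hδ h]

theorem stmt_6_general {Ω : Type*} [MeasurableSpace Ω] (μ : Measure Ω) [IsProbabilityMeasure μ]
    {F : Type*} [Fintype F] (m : ℕ) (hmcard : Fintype.card F = m) (hm : 0 < m)
    (n : ℕ) (hn : 2 ≤ n) (Z : F → Fin n → Ω → ℝ)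
    (hmeas : ∀ i k, Measurable (Z i k))
    (hindep : ∀ i, iIndepFun (Z i) μ)
    (hsym : ∀ i k, Measure.map (Z i k) μ = Measure.map (fun ω => -(Z i k ω)) μ)
    (μhat : F → Ω → ℝ) (hμ : ∀ i ω, μhat i ω = (1 / (n : ℝ)) * ∑ k, Z i k ω)
    (σhat : F → Ω → ℝ)
    (hσ : ∀ i ω, σhat i ω =
      Real.sqrt ((1 / ((n : ℝ) - 1)) * ∑ k, (Z i k ω - μhat i ω) ^ 2))
    (δ : ℝ) (hδ0 : 0 < δ) (hδ1 : δ < 1)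
    (hsize : (m : ℝ) ≤ (δ / 2) * Real.exp ((n : ℝ) / 8)) :
    1 - δ ≤ (μ {ω | ∀ i, |μhat i ω| ≤
      (σhat i ω / Real.sqrt n) * Real.sqrt (4 * Real.log (2 * m / δ))}).toReal := by
  have hm1 : (1 : ℝ) ≤ m := by exact_mod_cast hm
  set L := log (2 * m / δ)
  have hL0 : 0 ≤ L := log_nonneg (by rw [le_div_iff₀ hδ0]; linarith)
  have hLn : L ≤ n / 8 := by
    rw [log_le_iff_le_exp (by positivity), div_le_iff₀ hδ0]; linarith
  set t := √(4 * L)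
  have ht : t ^ 2 = 4 * L := sq_sqrt (by positivity)
  have hbad : {ω | ∀ i, |μhat i ω| ≤ σhat i ω / √n * t}ᶜ
      ⊆ ⋃ i, {ω | sampleStd (Z i · ω) / √n * t < |sampleMean (Z i · ω)|} := by
    intro ω hω
    simpa [hμ, hσ, sampleStd, sampleMean] using hω
  refine one_sub_le_toReal_measure_of_measure_compl_le hδ0.le ?_
  calc μ {ω | ∀ i, |μhat i ω| ≤ σhat i ω / √n * t}ᶜ
      ≤ ∑ i, μ {ω | sampleStd (Z i · ω) / √n * t < |sampleMean (Z i · ω)|} :=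
        (measure_mono hbad).trans (measure_iUnion_fintype_le _ _)
    _ ≤ ∑ _i : F, ENNReal.ofReal (2 * exp (-(t ^ 2 / 4))) :=
        sum_le_sum fun i _ => measure_lt_abs_sampleMean_le hn (hmeas i) (hindep i) (hsym i)
          (sqrt_nonneg _) (by linarith)
    _ = ENNReal.ofReal δ := by
        rw [sum_const, card_univ, hmcard, nsmul_eq_mul, ← ENNReal.ofReal_natCast,
          ← ENNReal.ofReal_mul (by positivity), ht, show -(4 * L / 4) = -L by ring, exp_neg,
          exp_log (by positivity)]
        congr 1
        field_simp

/-- uniform T-statistic confidence bound over a feature set F of size m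
with m ≤ (δ/2)·e^{n/8}. -/
theorem stmt_6 {Ω : Type*} [MeasurableSpace Ω] (μ : Measure Ω) [IsProbabilityMeasure μ]
    {F : Type*} [Fintype F] (m : ℕ) (hmcard : Fintype.card F = m) (hm : 0 < m)
    (n : ℕ) (hn : 2 ≤ n) (Z : F → Fin n → Ω → ℝ)
    (hmeas : ∀ i k, Measurable (Z i k))
    (hindep : ∀ i, iIndepFun (Z i) μ)
    (hsym : ∀ i k, Measure.map (Z i k) μ = Measure.map (fun ω => -(Z i k ω)) μ)
    (hint : ∀ i k, Integrable (Z i k) μ)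
    (hmean : ∀ i k, ∫ ω, Z i k ω ∂μ = 0)
    (μhat : F → Ω → ℝ) (hμ : ∀ i ω, μhat i ω = (1 / (n : ℝ)) * ∑ k, Z i k ω)
    (σhat : F → Ω → ℝ)
    (hσ : ∀ i ω, σhat i ω =
      Real.sqrt ((1 / ((n : ℝ) - 1)) * ∑ k, (Z i k ω - μhat i ω) ^ 2))
    (δ : ℝ) (hδ0 : 0 < δ) (hδ1 : δ < 1)
    (hsize : (m : ℝ) ≤ (δ / 2) * Real.exp ((n : ℝ) / 8)) :
    1 - δ ≤ (μ {ω | ∀ i, |μhat i ω| ≤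
      (σhat i ω / Real.sqrt n) * Real.sqrt (4 * Real.log (2 * m / δ))}).toReal :=
  stmt_6_general μ m hmcard hm n hn Z hmeas hindep hsym μhat hμ σhat hσ δ hδ0 hδ1 hsize
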